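/- arXiv:2112.03523 — 2 statements merged into one kernel-verified Lean document; each statement's English description precedes it below -/
import Mathlib

section
/- Let the edge E of a polygon connect c + d_i and c + d_j in ℝ², and let Ẽ connect c + μ d_i and c + μ d_j for 0 < μ < 1, with d_i ≠ d_j. Then E and Ẽ lie on parallel lines, and the distance between these lines equals (1 − μ) |d_{jx} d_{iy} − d_{ix} d_{jy}| / ‖d_j − d_i‖. -/
/-!
Both lines have direction `ℝ ∙ (dj - di)`, since scaling by `μ ≠ 0` does not change a span.
A point of one line minus a point of the other is `a + t • e` for some `t`, with
`a = (1 - μ) • di` and `e = dj - di`, so the distance is the minimum of `‖a + t • e‖` over `t`. In the plane, Lagrange's identity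
`cross x e ^ 2 + ⟪x, e⟫ ^ 2 = ‖x‖ ^ 2 * ‖e‖ ^ 2` gives `|cross x e| ≤ ‖x‖ * ‖e‖` with equality
when `x ⟂ e`; as `cross (a + t • e) e = cross a e`, the minimum is `|cross a e| / ‖e‖`,
attained at the foot of the perpendicular.
-/

open scoped RealInnerProductSpace
open Set

namespace EuclideanSpace

def cross (x y : EuclideanSpace ℝ (Fin 2)) : ℝ := x 0 * y 1 - x 1 * y 0

lemma cross_sq_add_inner_sq (x y : EuclideanSpace ℝ (Fin 2)) :
    cross x y ^ 2 + ⟪x, y⟫ ^ 2 = ‖x‖ ^ 2 * ‖y‖ ^ 2 := by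
  simp only [cross, ← real_inner_self_eq_norm_sq, PiLp.inner_apply, RCLike.inner_apply,
    conj_trivial, Fin.sum_univ_two]
  ring

lemma abs_cross_le (x y : EuclideanSpace ℝ (Fin 2)) : |cross x y| ≤ ‖x‖ * ‖y‖ := by
  rw [← sq_le_sq₀ (abs_nonneg _) (by positivity), sq_abs, mul_pow, ← cross_sq_add_inner_sq]
  exact le_add_of_nonneg_right (sq_nonneg _)

lemma abs_cross_of_inner_eq_zero {x y : EuclideanSpace ℝ (Fin 2)} (h : ⟪x, y⟫ = 0) :
    |cross x y| = ‖x‖ * ‖y‖ := by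
  rw [← sq_eq_sq₀ (abs_nonneg _) (by positivity), sq_abs, mul_pow, ← cross_sq_add_inner_sq, h]
  ring

lemma cross_add_smul_self (x y : EuclideanSpace ℝ (Fin 2)) (t : ℝ) :
    cross (x + t • y) y = cross x y := by
  simp only [cross, PiLp.add_apply, PiLp.smul_apply, smul_eq_mul]
  ring

lemma isLeast_norm_add_smul {e : EuclideanSpace ℝ (Fin 2)} (he : e ≠ 0)
    (a : EuclideanSpace ℝ (Fin 2)) :
    IsLeast (range fun t : ℝ => ‖a + t • e‖) (|cross a e| / ‖e‖) := by
  have hen : 0 < ‖e‖ := norm_pos_iff.mpr he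
  refine ⟨⟨-⟪a, e⟫ / ‖e‖ ^ 2, ?_⟩, ?_⟩
  · have hperp : ⟪a + (-⟪a, e⟫ / ‖e‖ ^ 2) • e, e⟫ = 0 := by
      rw [inner_add_left, real_inner_smul_left, real_inner_self_eq_norm_sq]
      field_simp
      ring
    dsimp only
    rw [← cross_add_smul_self a e (-⟪a, e⟫ / ‖e‖ ^ 2), abs_cross_of_inner_eq_zero hperp,
      mul_div_cancel_right₀ _ hen.ne']
  · rintro _ ⟨t, rfl⟩
    rw [div_le_iff₀ hen, ← cross_add_smul_self a e t]
    exact abs_cross_le _ _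

end EuclideanSpace

namespace AffineSubspace

variable {V : Type*} [NormedAddCommGroup V] [NormedSpace ℝ V]

lemma setOf_dist_eq_range_of_direction_eq_span {s t : AffineSubspace ℝ V} {p q e : V}
    (hp : p ∈ s) (hq : q ∈ t) (hs : s.direction = ℝ ∙ e) (ht : t.direction = ℝ ∙ e) :
    {r : ℝ | ∃ x ∈ s, ∃ y ∈ t, r = dist x y} = range fun r : ℝ => ‖p - q + r • e‖ := by
  ext r
  simp only [mem_ofPred_eq, mem_range]
  constructor
  · rintro ⟨x, hx, y, hy, rfl⟩
    have hx' : x - p ∈ ℝ ∙ e := hs ▸ vsub_mem_direction hx hp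
    have hy' : y - q ∈ ℝ ∙ e := ht ▸ vsub_mem_direction hy hq
    obtain ⟨a, ha⟩ := Submodule.mem_span_singleton.1 (Submodule.sub_mem _ hx' hy')
    refine ⟨a, ?_⟩
    rw [ha, dist_eq_norm]
    abel_nf
  · rintro ⟨a, rfl⟩
    have hae : a • e ∈ s.direction :=
      hs ▸ Submodule.smul_mem _ a (Submodule.mem_span_singleton_self e)
    have hx : a • e + p ∈ s := vadd_mem_of_mem_direction hae hp
    refine ⟨a • e + p, hx, q, hq, ?_⟩
    rw [dist_eq_norm]
    abel_nf

end AffineSubspace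

theorem stmt_4 (c di dj : EuclideanSpace ℝ (Fin 2)) (hne : di ≠ dj)
    (μ : ℝ) (hμ0 : 0 < μ) (hμ1 : μ < 1) :
    AffineSubspace.Parallel
      (affineSpan ℝ {c + di, c + dj})
      (affineSpan ℝ {c + μ • di, c + μ • dj}) ∧
    sInf {r : ℝ | ∃ p ∈ (affineSpan ℝ {c + di, c + dj} :
          AffineSubspace ℝ (EuclideanSpace ℝ (Fin 2))),
        ∃ q ∈ (affineSpan ℝ {c + μ • di, c + μ • dj} :
          AffineSubspace ℝ (EuclideanSpace ℝ (Fin 2))), r = dist p q} =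
      (1 - μ) * |dj 0 * di 1 - di 0 * dj 1| / ‖dj - di‖ := by
  have hdir : (affineSpan ℝ {c + di, c + dj}).direction = ℝ ∙ (dj - di) := by
    rw [direction_affineSpan, vectorSpan_pair_rev, vsub_eq_sub, add_sub_add_left_eq_sub]
  have hdirμ : (affineSpan ℝ {c + μ • di, c + μ • dj}).direction = ℝ ∙ (dj - di) := by
    rw [direction_affineSpan, vectorSpan_pair_rev, vsub_eq_sub, add_sub_add_left_eq_sub,
      ← smul_sub, Submodule.span_singleton_smul_eq (isUnit_iff_ne_zero.mpr hμ0.ne')]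
  have hcross : EuclideanSpace.cross (c + di - (c + μ • di)) (dj - di) =
      (1 - μ) * -(dj 0 * di 1 - di 0 * dj 1) := by
    simp only [EuclideanSpace.cross, PiLp.add_apply, PiLp.sub_apply, PiLp.smul_apply, smul_eq_mul]
    ring
  refine ⟨AffineSubspace.affineSpan_pair_parallel_iff_vectorSpan_eq.2 ?_, ?_⟩
  · rw [← direction_affineSpan, ← direction_affineSpan, hdir, hdirμ]
  · rw [AffineSubspace.setOf_dist_eq_range_of_direction_eq_span (left_mem_affineSpan_pair ℝ _ _)
      (left_mem_affineSpan_pair ℝ _ _) hdir hdirμ,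
      (EuclideanSpace.isLeast_norm_add_smul (sub_ne_zero.2 hne.symm) _).csInf_eq, hcross,
      abs_mul, abs_neg, abs_of_pos (sub_pos.2 hμ1)]
end

section
/- Let C ⊆ ℝ² be the convex hull of points c + d_j (j = 1..m) forming a convex m-gon with 0 in the interior of the hull of {d_j}, and let C̃ be the hull of c + μ d_j with 0 < μ < 1. Let α_p be the minimum over edges of the distance between the edge of C and the corresponding parallel edge of C̃. Then α_p > 0, and for every p₁ ∈ C̃ and p₂ ∉ C, ‖p₁ − p₂‖ > α_p. -/
noncomputable section
namespace Stmt16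

abbrev E2 := EuclideanSpace ℝ (Fin 2)

def cr (a b : E2) : ℝ := a 0 * b 1 - a 1 * b 0

def rot (a : E2) : E2 := (WithLp.equiv 2 (Fin 2 → ℝ)).symm ![a 1, -(a 0)]

lemma rot0 (a : E2) : rot a 0 = a 1 := rfl
lemma rot1 (a : E2) : rot a 1 = -(a 0) := rfl
lemma sub0 (a b : E2) : (a - b) 0 = a 0 - b 0 := rfl
lemma sub1 (a b : E2) : (a - b) 1 = a 1 - b 1 := rfl
lemma add0 (a b : E2) : (a + b) 0 = a 0 + b 0 := rfl
lemma add1 (a b : E2) : (a + b) 1 = a 1 + b 1 := rfl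
lemma smul0 (r : ℝ) (a : E2) : (r • a) 0 = r * a 0 := rfl
lemma smul1 (r : ℝ) (a : E2) : (r • a) 1 = r * a 1 := rfl
lemma zero0 : (0 : E2) 0 = 0 := rfl
lemma zero1 : (0 : E2) 1 = 0 := rfl

lemma inner2 (a b : E2) : (inner ℝ a b : ℝ) = a 0 * b 0 + a 1 * b 1 := by
  simp [PiLp.inner_apply, Fin.sum_univ_two, RCLike.inner_apply, mul_comm]

lemma norm2 (a : E2) : ‖a‖ = Real.sqrt (a 0 ^ 2 + a 1 ^ 2) := by
  rw [EuclideanSpace.norm_eq]; simp [Fin.sum_univ_two, sq_abs]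

lemma normsq (a : E2) : ‖a‖ ^ 2 = a 0 ^ 2 + a 1 ^ 2 := by
  rw [norm2, Real.sq_sqrt] <;> positivity

lemma ext2 (a b : E2) (h0 : a 0 = b 0) (h1 : a 1 = b 1) : a = b := by
  apply PiLp.ext; intro i; fin_cases i <;> assumption

lemma norm_rot (a : E2) : ‖rot a‖ = ‖a‖ := by
  rw [norm2, norm2, rot0, rot1]; ring_nf

lemma cr_sub_right (a b c : E2) : cr a (b - c) = cr a b - cr a c := by
  simp [cr, sub0, sub1]; ring
lemma cr_smul_right (a : E2) (r : ℝ) (b : E2) : cr a (r • b) = r * cr a b := by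
  simp [cr, smul0, smul1]; ring
lemma cr_smul_left (r : ℝ) (a b : E2) : cr (r • a) b = r * cr a b := by
  simp [cr, smul0, smul1]; ring
lemma cr_self (a : E2) : cr a a = 0 := by simp [cr]; ring
lemma cr_anti (a b : E2) : cr a b = -cr b a := by simp [cr]; ring
lemma cr_rot_rot (a b : E2) : cr (rot a) (rot b) = cr a b := by
  simp [cr, rot0, rot1]; ring
lemma inner_rot (a b : E2) : (inner ℝ (rot a) b : ℝ) = -cr a b := by
  rw [inner2]; simp [cr, rot0, rot1]; ring
lemma inner_eq_cr_rot (a b : E2) : (inner ℝ a b : ℝ) = cr (rot a) b := by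
  rw [inner2]; simp [cr, rot0, rot1]; ring
lemma cr_rot_self (a : E2) : cr a (rot a) = -‖a‖ ^ 2 := by
  rw [normsq]; simp [cr, rot0, rot1]; ring

lemma isLinearMap_cr (e : E2) : IsLinearMap ℝ (fun x => cr e x) := by
  constructor
  · intro a b; simp [cr, add0, add1]; ring
  · intro r a; simp [cr, smul0, smul1]; ring

lemma cramer (a b v : E2) (h : cr a b ≠ 0) :
    v = (cr v b / cr a b) • a + (cr a v / cr a b) • b := by
  apply ext2 <;> · simp only [add0, add1, smul0, smul1]; unfold cr at *; have h' : b 1 * a 0 - b 0 * a 1 ≠ 0 := fun hh => h (by linarith); field_simp; ring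

/-- decomposition in orthogonal basis {e, rot e} -/
lemma decomp_orth (e v : E2) (he : e ≠ 0) :
    v = ((inner ℝ e v : ℝ) / ‖e‖ ^ 2) • e + ((inner ℝ (rot e) v : ℝ) / ‖e‖ ^ 2) • rot e := by
  have h2 : e 0 ^ 2 + e 1 ^ 2 ≠ 0 := by
    intro h
    exact he (ext2 _ _ (by rw [zero0]; nlinarith [sq_nonneg (e 0), sq_nonneg (e 1)])
      (by rw [zero1]; nlinarith [sq_nonneg (e 0), sq_nonneg (e 1)]))
  rw [inner2, inner2, normsq]
  apply ext2 <;> · simp only [add0, add1, smul0, smul1]; simp only [rot0, rot1]; field_simp; ring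

/-- parallel decomposition when cross product vanishes -/
lemma parallel_of_cr_eq_zero (a b : E2) (ha : a ≠ 0) (h : cr a b = 0) :
    b = ((inner ℝ a b : ℝ) / ‖a‖ ^ 2) • a := by
  have := decomp_orth a b ha
  rw [inner_rot, h] at this
  simpa using this


lemma norm_ne_zero {a : E2} (ha : a ≠ 0) : ‖a‖ ≠ 0 := norm_ne_zero_iff.mpr ha
lemma norm_pos {a : E2} (ha : a ≠ 0) : 0 < ‖a‖ := norm_pos_iff.mpr ha

/-- a small probe point on the negative side of the line through 0 normal-ish to e -/
lemma probe (e : E2) (he : e ≠ 0) (ε : ℝ) (hε : 0 < ε) :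
    ∃ x : E2, ‖x‖ < ε ∧ cr e x < 0 := by
  have hne : (0:ℝ) < ‖e‖ := norm_pos he
  have h1 : (0:ℝ) < ε / (2 * ‖e‖) := by positivity
  refine ⟨(ε / (2 * ‖e‖)) • rot e, ?_, ?_⟩
  · rw [norm_smul, norm_rot, Real.norm_eq_abs, abs_of_pos h1]
    have : ε / (2 * ‖e‖) * ‖e‖ = ε / 2 := by field_simp
    rw [this]; linarith
  · rw [cr_smul_right, cr_rot_self]
    have h2 : (0:ℝ) < ‖e‖ ^ 2 := by positivity
    nlinarith

/-- strictness of halfspace bound from a ball around the origin -/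
lemma halfspace_strict (e : E2) (he : e ≠ 0) (C ε : ℝ) (hε : 0 < ε)
    (h : ∀ x ∈ Metric.ball (0 : E2) ε, C ≤ cr e x) : C < 0 := by
  obtain ⟨x, hx, hxneg⟩ := probe e he ε hε
  have := h x (by simpa [Metric.mem_ball, dist_zero_right] using hx)
  linarith

lemma not_plane_ball (e : E2) (he : e ≠ 0) (C ε : ℝ) (hε : 0 < ε)
    (h : ∀ x ∈ Metric.ball (0 : E2) ε, cr e x = C) : False := by
  obtain ⟨x, hx, hxneg⟩ := probe e he ε hε
  have h1 := h x (by simpa [Metric.mem_ball, dist_zero_right] using hx)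
  have h2 := h 0 (by simpa [Metric.mem_ball, dist_zero_right] using hε)
  simp [cr, zero0, zero1] at h2
  rw [← h2] at h1
  linarith

lemma cr_add_right (a b c : E2) : cr a (b + c) = cr a b + cr a c := by
  simp [cr, add0, add1]; ring

lemma stepA {m : ℕ} [NeZero m] (d : Fin m → E2)
    (hne : ∀ i : Fin m, d (i + 1) - d i ≠ 0)
    (hcp : ∀ i k : Fin m, 0 ≤ cr (d (i + 1) - d i) (d k - d i))
    (ε : ℝ) (hε : 0 < ε) (hball : Metric.ball 0 ε ⊆ convexHull ℝ (Set.range d)) :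
    ∀ i, cr (d (i + 1) - d i) (d i) < 0 := by
  intro i
  set e := d (i + 1) - d i with he
  have hsub : convexHull ℝ (Set.range d) ⊆ {x | cr e (d i) ≤ cr e x} := by
    apply convexHull_min
    · rintro _ ⟨k, rfl⟩
      have h1 := hcp i k
      rw [cr_sub_right] at h1
      simp only [Set.mem_setOf_eq]
      linarith
    · exact convex_halfSpace_ge (isLinearMap_cr e) _
  exact halfspace_strict e (hne i) _ ε hε (fun x hx => hsub (hball hx))

set_option maxHeartbeats 2000000 in
lemma ballSubset {m : ℕ} [NeZero m] (d : Fin m → E2)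
    (hne : ∀ i : Fin m, d (i + 1) - d i ≠ 0)
    (hcp : ∀ i k : Fin m, 0 ≤ cr (d (i + 1) - d i) (d k - d i))
    (ε : ℝ) (hε : 0 < ε) (hball : Metric.ball 0 ε ⊆ convexHull ℝ (Set.range d))
    (r : ℝ) (hr0 : 0 < r)
    (hrle : ∀ i, r ≤ -cr (d (i + 1) - d i) (d i) / ‖d (i + 1) - d i‖) :
    ∀ v : E2, ‖v‖ ≤ r → v ∈ convexHull ℝ (Set.range d) := by
  have hA := stepA d hne hcp ε hε hball
  set K := convexHull ℝ (Set.range d) with hKdef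
  have hKconv : Convex ℝ K := convex_convexHull ℝ _
  have hKcl : IsClosed K := (Set.finite_range d).isClosed_convexHull ℝ
  intro v hv
  by_contra hvK
  obtain ⟨φ, u, hφK, hφv⟩ := geometric_hahn_banach_closed_point hKconv hKcl hvK
  obtain ⟨w, hwdef⟩ : ∃ y, y = (InnerProductSpace.toDual ℝ E2).symm φ := ⟨_, rfl⟩
  have hwx : ∀ x : E2, (inner ℝ w x : ℝ) = φ x := fun x => by
    rw [hwdef]; exact InnerProductSpace.toDual_symm_apply
  have hsep : ∀ x ∈ K, (inner ℝ w x : ℝ) < inner ℝ w v := fun x hx => by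
    rw [hwx, hwx]; exact lt_trans (hφK x hx) hφv
  have hd0K : d 0 ∈ K := subset_convexHull ℝ _ ⟨0, rfl⟩
  have hwne : w ≠ 0 := by
    intro h
    have h1 := hsep (d 0) hd0K
    rw [h] at h1
    simp at h1
  have hwpos : (0:ℝ) < ‖w‖ := norm_pos hwne
  obtain ⟨u₀, hu₀def⟩ : ∃ y, y = ‖w‖⁻¹ • w := ⟨_, rfl⟩
  have hu₀ : ‖u₀‖ = 1 := by
    rw [hu₀def, norm_smul, norm_inv, norm_norm]
    field_simp
  have hsep0 : ∀ x ∈ K, (inner ℝ u₀ x : ℝ) < inner ℝ u₀ v := by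
    intro x hx
    rw [hu₀def, real_inner_smul_left, real_inner_smul_left]
    exact mul_lt_mul_of_pos_left (hsep x hx) (inv_pos.mpr hwpos)
  have hvle : (inner ℝ u₀ v : ℝ) ≤ r := by
    have h1 := real_inner_le_norm u₀ v
    rw [hu₀, one_mul] at h1
    linarith
  obtain ⟨j, -, hj⟩ := Finset.exists_max_image Finset.univ
    (fun k => (inner ℝ u₀ (d k) : ℝ)) ⟨0, Finset.mem_univ 0⟩
  have hjlt : (inner ℝ u₀ (d j) : ℝ) < r :=
    lt_of_lt_of_le (hsep0 (d j) (subset_convexHull ℝ _ ⟨j, rfl⟩)) hvle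
  obtain ⟨e, he⟩ : ∃ y, y = d (j + 1) - d j := ⟨_, rfl⟩
  obtain ⟨e', he'⟩ : ∃ y, y = d j - d (j - 1) := ⟨_, rfl⟩
  have he'e : e' = d ((j - 1) + 1) - d (j - 1) := by rw [sub_add_cancel]; exact he'
  have hene : e ≠ 0 := by rw [he]; exact hne j
  have he'ne : e' ≠ 0 := by rw [he'e]; exact hne (j - 1)
  have hepos : (0:ℝ) < ‖e‖ := norm_pos hene
  have he'pos : (0:ℝ) < ‖e'‖ := norm_pos he'ne
  have hue : (inner ℝ u₀ e : ℝ) ≤ 0 := by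
    rw [he, inner_sub_right]
    have := hj (j + 1) (Finset.mem_univ _)
    linarith
  have hue' : (0:ℝ) ≤ inner ℝ u₀ e' := by
    rw [he', inner_sub_right]
    have := hj (j - 1) (Finset.mem_univ _)
    linarith
  have hcross : 0 ≤ cr e' e := by
    have h1 := hcp (j - 1) (j + 1)
    rw [← he'e] at h1
    have h2 : d (j + 1) - d (j - 1) = e + e' := by rw [he, he']; abel
    rw [h2, cr_add_right, cr_self, add_zero] at h1
    exact h1
  have hAj : cr e (d j) < 0 := by rw [he]; exact hA j
  have hAj' : cr e' (d (j - 1)) < 0 := by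
    have := hA (j - 1); rw [← he'e] at this; exact this
  have hfj : r ≤ -cr e (d j) / ‖e‖ := by rw [he]; exact hrle j
  have hfj' : r ≤ -cr e' (d (j - 1)) / ‖e'‖ := by
    have := hrle (j - 1); rw [← he'e] at this; exact this
  have hballK : Metric.ball (0:E2) ε ⊆ K := hball
  rcases lt_or_eq_of_le hcross with hc | hc
  · -- generic case : adjacent edge normals span
    obtain ⟨n, hn⟩ : ∃ y, y = ‖e‖⁻¹ • rot e := ⟨_, rfl⟩
    obtain ⟨n', hn'⟩ : ∃ y, y = ‖e'‖⁻¹ • rot e' := ⟨_, rfl⟩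
    have hcrn : cr n' n = ‖e'‖⁻¹ * (‖e‖⁻¹ * cr e' e) := by
      rw [hn, hn', cr_smul_left, cr_smul_right, cr_rot_rot]
    have hcrnpos : 0 < cr n' n := by
      rw [hcrn]
      have h1 : (0:ℝ) < ‖e‖⁻¹ := inv_pos.mpr hepos
      have h2 : (0:ℝ) < ‖e'‖⁻¹ := inv_pos.mpr he'pos
      positivity
    obtain ⟨s, hs⟩ : ∃ y, y = cr u₀ n / cr n' n := ⟨_, rfl⟩
    obtain ⟨t, ht⟩ : ∃ y, y = cr n' u₀ / cr n' n := ⟨_, rfl⟩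
    have hdecomp : u₀ = s • n' + t • n := by rw [hs, ht]; exact cramer n' n u₀ (ne_of_gt hcrnpos)
    have hn'e' : (inner ℝ n' e' : ℝ) = 0 := by
      rw [hn', real_inner_smul_left, inner_rot, cr_self]; ring
    have hne'2 : (inner ℝ n e' : ℝ) = ‖e‖⁻¹ * cr e' e := by
      rw [hn, real_inner_smul_left, inner_rot, cr_anti e e']; ring
    have hn'e2 : (inner ℝ n' e : ℝ) = -(‖e'‖⁻¹ * cr e' e) := by
      rw [hn', real_inner_smul_left, inner_rot]; ring
    have hnn2 : (inner ℝ n e : ℝ) = 0 := by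
      rw [hn, real_inner_smul_left, inner_rot, cr_self]; ring
    have hndj : (inner ℝ n (d j) : ℝ) = -cr e (d j) * ‖e‖⁻¹ := by
      rw [hn, real_inner_smul_left, inner_rot]; ring
    have hn'dj : (inner ℝ n' (d j) : ℝ) = -cr e' (d (j - 1)) * ‖e'‖⁻¹ := by
      have hdj : d j = d (j - 1) + e' := by rw [he']; abel
      rw [hdj, inner_add_right, hn'e', add_zero, hn', real_inner_smul_left, inner_rot]
      ring
    have htpos : 0 ≤ t := by
      have h1 : (inner ℝ u₀ e' : ℝ) = t * (‖e‖⁻¹ * cr e' e) := by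
        conv_lhs => rw [hdecomp]
        rw [inner_add_left, real_inner_smul_left, real_inner_smul_left, hn'e', hne'2]
        ring
      rw [h1] at hue'
      have h2 : (0:ℝ) < ‖e‖⁻¹ * cr e' e := by
        have := inv_pos.mpr hepos; positivity
      nlinarith [hue', h2]
    have hspos : 0 ≤ s := by
      have h1 : (inner ℝ u₀ e : ℝ) = s * -(‖e'‖⁻¹ * cr e' e) := by
        conv_lhs => rw [hdecomp]
        rw [inner_add_left, real_inner_smul_left, real_inner_smul_left, hnn2, hn'e2]
        ring
      rw [h1] at hue
      have h2 : (0:ℝ) < ‖e'‖⁻¹ * cr e' e := by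
        have := inv_pos.mpr he'pos; positivity
      nlinarith
    have hnorm1 : ‖n‖ = 1 := by
      rw [hn, norm_smul, norm_inv, norm_norm, norm_rot]
      field_simp
    have hnorm1' : ‖n'‖ = 1 := by
      rw [hn', norm_smul, norm_inv, norm_norm, norm_rot]
      field_simp
    have hst1 : 1 ≤ s + t := by
      have h1 : ‖u₀‖ ≤ s * ‖n'‖ + t * ‖n‖ := by
        rw [hdecomp]
        refine le_trans (norm_add_le _ _) ?_
        rw [norm_smul, norm_smul, Real.norm_eq_abs, Real.norm_eq_abs,
          abs_of_nonneg hspos, abs_of_nonneg htpos]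
      rw [hu₀, hnorm1, hnorm1'] at h1
      linarith
    have hfinal : r ≤ (inner ℝ u₀ (d j) : ℝ) := by
      have h1 : (inner ℝ u₀ (d j) : ℝ) = s * (-cr e' (d (j - 1)) * ‖e'‖⁻¹) + t * (-cr e (d j) * ‖e‖⁻¹) := by
        conv_lhs => rw [hdecomp]
        rw [inner_add_left, real_inner_smul_left, real_inner_smul_left, hndj, hn'dj]
      have h2 : -cr e (d j) * ‖e‖⁻¹ = -cr e (d j) / ‖e‖ := by ring
      have h3 : -cr e' (d (j - 1)) * ‖e'‖⁻¹ = -cr e' (d (j - 1)) / ‖e'‖ := by ring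
      rw [h1, h2, h3]
      nlinarith [hfj, hfj', hspos, htpos, hst1, hr0]
    linarith
  · -- degenerate case : collinear adjacent edges
    have hpar : e = ((inner ℝ e' e : ℝ) / ‖e'‖ ^ 2) • e' := parallel_of_cr_eq_zero e' e he'ne hc.symm
    obtain ⟨lam, hlam⟩ : ∃ y, y = (inner ℝ e' e : ℝ) / ‖e'‖ ^ 2 := ⟨_, rfl⟩
    rw [← hlam] at hpar
    have hlamne : lam ≠ 0 := by
      intro h
      rw [h, zero_smul] at hpar
      exact hene hpar
    rcases lt_or_gt_of_ne hlamne with hlneg | hlpos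
    · -- spike : all vertices collinear, contradict interior point
      have hall : ∀ k, cr e (d k) = cr e (d j) := by
        intro k
        have h1 := hcp j k
        rw [← he] at h1
        have h2 : 0 ≤ cr e' (d k - d (j - 1)) := by
          have := hcp (j - 1) k; rw [← he'e] at this; exact this
        have h3 : d k - d j = (d k - d (j - 1)) - e' := by rw [he']; abel
        have h4 : cr e (d k - d j) = lam * cr e' (d k - d (j - 1)) := by
          rw [h3, hpar, cr_smul_left, cr_sub_right, cr_self, sub_zero]
        rw [h4] at h1
        have h5 : cr e' (d k - d (j - 1)) = 0 := by nlinarith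
        have h6 : cr e (d k - d j) = 0 := by rw [h4, h5, mul_zero]
        rw [cr_sub_right] at h6
        linarith
      have hsub : K ⊆ {x | cr e x = cr e (d j)} := by
        apply convexHull_min
        · rintro _ ⟨k, rfl⟩
          exact hall k
        · have hconv1 : Convex ℝ {x : E2 | cr e x ≤ cr e (d j)} :=
            convex_halfSpace_le (isLinearMap_cr e) _
          have hconv2 : Convex ℝ {x : E2 | cr e (d j) ≤ cr e x} :=
            convex_halfSpace_ge (isLinearMap_cr e) _
          have : {x : E2 | cr e x = cr e (d j)} =
              {x : E2 | cr e x ≤ cr e (d j)} ∩ {x : E2 | cr e (d j) ≤ cr e x} := by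
            ext x; simp [le_antisymm_iff]
          rw [this]
          exact hconv1.inter hconv2
      exact not_plane_ball e hene (cr e (d j)) ε hε
        (fun x hx => hsub (hballK hx))
    · -- parallel same direction : u₀ is orthogonal to e
      have hue'0 : (inner ℝ u₀ e' : ℝ) = 0 := by
        have h1 : (inner ℝ u₀ e : ℝ) = lam * inner ℝ u₀ e' := by
          rw [hpar, real_inner_smul_right]
        nlinarith
      have hue0 : (inner ℝ u₀ e : ℝ) = 0 := by
        rw [hpar, real_inner_smul_right, hue'0, mul_zero]
      have hdec := decomp_orth e u₀ hene
      have hie : (inner ℝ e u₀ : ℝ) = 0 := by rw [real_inner_comm]; exact hue0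
      rw [hie, zero_div, zero_smul, zero_add] at hdec
      obtain ⟨β, hβ⟩ : ∃ y, y = (inner ℝ (rot e) u₀ : ℝ) / ‖e‖ ^ 2 := ⟨_, rfl⟩
      rw [← hβ] at hdec
      have habs : |β| * ‖e‖ = 1 := by
        have h1 : ‖u₀‖ = |β| * ‖e‖ := by
          rw [hdec, norm_smul, Real.norm_eq_abs, norm_rot]
        rw [← h1, hu₀]
      have hβne : β ≠ 0 := by
        intro h
        rw [h, abs_zero, zero_mul] at habs
        norm_num at habs
      rcases lt_or_gt_of_ne hβne with hβneg | hβpos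
      · -- u₀ = -n : contradict 0 ∈ K
        have h0K : (0 : E2) ∈ K := hballK (by
          simp [Metric.mem_ball, dist_zero_right, hε])
        have hsubj : K ⊆ {x | cr (rot u₀) x ≤ cr (rot u₀) (d j)} := by
          apply convexHull_min
          · rintro _ ⟨k, rfl⟩
            have h5 := hj k (Finset.mem_univ _)
            rw [inner_eq_cr_rot, inner_eq_cr_rot] at h5
            exact h5
          · exact convex_halfSpace_le (isLinearMap_cr (rot u₀)) _
        have h2 := hsubj h0K
        simp only [Set.mem_setOf_eq] at h2
        have h3 : cr (rot u₀) (0 : E2) = 0 := by simp [cr, zero0, zero1]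
        rw [h3, ← inner_eq_cr_rot] at h2
        have h4 : (inner ℝ u₀ (d j) : ℝ) = β * -cr e (d j) := by
          rw [hdec, real_inner_smul_left, inner_rot]
        nlinarith
      · -- u₀ = n : inner ℝ u₀ (d j) = dist of edge line ≥ r
        have h4 : (inner ℝ u₀ (d j) : ℝ) = β * -cr e (d j) := by
          rw [hdec, real_inner_smul_left, inner_rot]
        have hβval : β = ‖e‖⁻¹ := by
          rw [abs_of_pos hβpos] at habs
          field_simp at habs ⊢
          linarith
        rw [h4, hβval] at hjlt
        have h5 : ‖e‖⁻¹ * -cr e (d j) = -cr e (d j) / ‖e‖ := by ring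
        rw [h5] at hjlt
        linarith [hfj]

def am (c : E2) (μ : ℝ) : E2 →ᵃ[ℝ] E2 where
  toFun x := c + μ • x
  linear := μ • LinearMap.id
  map_vadd' p v := by
    simp only [vadd_eq_add, LinearMap.smul_apply, LinearMap.id_coe, id_eq, smul_add]
    abel

lemma hull_affine (c : E2) (μ : ℝ) (d : Fin m → E2) :
    convexHull ℝ (Set.range fun j => c + μ • d j) =
      (fun x => c + μ • x) '' convexHull ℝ (Set.range d) := by
  have h1 : (Set.range fun j => c + μ • d j) = (am c μ) '' Set.range d := by
    rw [← Set.range_comp]; rfl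
  have h2 : ⇑(am c μ) = fun x => c + μ • x := rfl
  rw [h1, ← AffineMap.image_convexHull, h2]

end Stmt16

open Stmt16 in
theorem stmt_16 (m : ℕ) [NeZero m] (c : EuclideanSpace ℝ (Fin 2))
    (d : Fin m → EuclideanSpace ℝ (Fin 2)) (μ : ℝ) (hμ0 : 0 < μ) (hμ1 : μ < 1)
    (hdist : ∀ i : Fin m, d i ≠ d (i + 1))
    (hconvexpos : ∀ i k : Fin m,
      0 ≤ (d (i + 1) 0 - d i 0) * (d k 1 - d i 1) - (d (i + 1) 1 - d i 1) * (d k 0 - d i 0))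
    (h0 : (0 : EuclideanSpace ℝ (Fin 2)) ∈ interior (convexHull ℝ (Set.range d))) :
    0 < (1 - μ) * Finset.univ.inf' Finset.univ_nonempty
        (fun i : Fin m => |d (i + 1) 0 * d i 1 - d i 0 * d (i + 1) 1| / ‖d (i + 1) - d i‖) ∧
    ∀ p₁ ∈ convexHull ℝ (Set.range fun j => c + μ • d j),
      ∀ p₂ ∉ convexHull ℝ (Set.range fun j => c + d j),
        (1 - μ) * Finset.univ.inf' Finset.univ_nonempty
            (fun i : Fin m => |d (i + 1) 0 * d i 1 - d i 0 * d (i + 1) 1| / ‖d (i + 1) - d i‖)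
          < ‖p₁ - p₂‖ := by
  have hne : ∀ i : Fin m, d (i + 1) - d i ≠ 0 := fun i => sub_ne_zero.mpr (hdist i).symm
  have hcp : ∀ i k : Fin m, 0 ≤ cr (d (i + 1) - d i) (d k - d i) := fun i k =>
    hconvexpos i k
  obtain ⟨ε, hε, hball⟩ : ∃ ε > 0, Metric.ball (0 : E2) ε ⊆ convexHull ℝ (Set.range d) := by
    rw [mem_interior_iff_mem_nhds] at h0
    exact Metric.mem_nhds_iff.mp h0
  have hA := stepA d hne hcp ε hε hball
  set f : Fin m → ℝ :=
    fun i : Fin m => |d (i + 1) 0 * d i 1 - d i 0 * d (i + 1) 1| / ‖d (i + 1) - d i‖ with hf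
  have hfr : ∀ i, f i = -cr (d (i + 1) - d i) (d i) / ‖d (i + 1) - d i‖ := by
    intro i
    have hnum : d (i + 1) 0 * d i 1 - d i 0 * d (i + 1) 1 = cr (d (i + 1) - d i) (d i) := by
      simp [cr, sub0, sub1]; ring
    rw [hf]
    simp only
    rw [hnum, abs_of_neg (hA i)]
  set r : ℝ := Finset.univ.inf' Finset.univ_nonempty f with hr
  have hr0 : 0 < r := by
    rw [hr, Finset.lt_inf'_iff]
    intro i _
    rw [hfr i]
    exact div_pos (by linarith [hA i]) (norm_pos (hne i))
  have hrle : ∀ i, r ≤ -cr (d (i + 1) - d i) (d i) / ‖d (i + 1) - d i‖ := by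
    intro i
    rw [← hfr i, hr]
    exact Finset.inf'_le _ (Finset.mem_univ i)
  have h1μ : (0:ℝ) < 1 - μ := by linarith
  constructor
  · exact mul_pos h1μ hr0
  · intro p₁ hp₁ p₂ hp₂
    by_contra hcon
    push_neg at hcon
    apply hp₂
    rw [hull_affine c μ d] at hp₁
    obtain ⟨q, hq, hq2⟩ := hp₁
    set v : E2 := p₂ - p₁ with hv
    have hvnorm : ‖v‖ ≤ (1 - μ) * r := by
      rw [hv, norm_sub_rev]
      exact hcon
    obtain ⟨y, hy⟩ : ∃ y : E2, y = (1 - μ)⁻¹ • v := ⟨_, rfl⟩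
    have hynorm : ‖y‖ ≤ r := by
      rw [hy, norm_smul, Real.norm_eq_abs, abs_of_pos (inv_pos.mpr h1μ)]
      rw [inv_mul_le_iff₀ h1μ]
      linarith
    have hyK : y ∈ convexHull ℝ (Set.range d) :=
      ballSubset d hne hcp ε hε hball r hr0 hrle y hynorm
    have hzK : μ • q + (1 - μ) • y ∈ convexHull ℝ (Set.range d) :=
      (convex_convexHull ℝ _) hq hyK hμ0.le h1μ.le (by ring)
    have hμeq : (fun j => c + d j) = fun j => c + (1:ℝ) • d j := by
      funext j; rw [one_smul]
    rw [hμeq, hull_affine c 1 d]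
    refine ⟨μ • q + (1 - μ) • y, hzK, ?_⟩
    show c + (1:ℝ) • (μ • q + (1 - μ) • y) = p₂
    have hq2' : c + μ • q = p₁ := hq2
    rw [one_smul, hy, smul_smul, mul_inv_cancel₀ (ne_of_gt h1μ), one_smul, hv, ← hq2']
    abel
end
end
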